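/- arXiv:2201.03100 — 2 statements merged into one kernel-verified Lean document; each statement's English description precedes it below -/
import Mathlib

section
/- Let q be an odd prime power and let X be a Peisert-type graph of type (m,q) with m ≥ 2. Then the eigenspace {v ∈ ℚ^(F_{q²}) : M v = (q − m) v} of the adjacency matrix M of X corresponding to the eigenvalue q − m equals the ℚ-linear span of the balanced characteristic vectors of the canonical cliques of X, and this eigenspace has dimension m(q − 1). -/
/-!
Write `P_a v x = ∑_{k ∈ K} v (a k + x)` for the sum of `v` over the line through `x` in
direction `a`. Since `S` is the disjoint union of the punctured lines `cᵢ K*`, the adjacency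
operator is `M = ∑ᵢ P_{cᵢ} - m`. As `F` is a plane over `K`, two non-parallel lines meet in
exactly one point, so `P_a` multiplies the balanced indicator of a line in direction `a` by `q`
and kills the balanced indicator of a line in any other direction: these are
`(q - m)`-eigenvectors.

Conversely, summing the entries of `M v = (q - m) v` gives `(m - 1) q ∑ v = 0`, so `∑ v = 0`,
and `v = q⁻¹ ∑ᵢ P_{cᵢ} v`. Each `P_{cᵢ} v` is constant on the lines of direction `cᵢ`, which
are the lines through the points of a transversal `d K`; together with `∑ v = 0` this writes it
as a combination of their balanced indicators. These `q` indicators sum to zero, any `q - 1` of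
them are independent, and `P_{cⱼ}` separates the directions, so the span has dimension
`m (q - 1)`.
-/

open Finset Matrix

namespace PeisertType

lemma sum_ite_eq_one_of_existsUnique {ι R : Type*} [Fintype ι] [AddCommMonoidWithOne R]
    {p : ι → Prop} [DecidablePred p] (h : ∃! i, p i) :
    ∑ i, (if p i then (1 : R) else 0) = 1 := by
  obtain ⟨i, hi, huniq⟩ := h
  rw [Fintype.sum_eq_single i fun j hj => if_neg fun hpj => hj (huniq j hpj), if_pos hi]

section Geometry

variable {F : Type*} [Field F] {K : Subfield F}

def line (K : Subfield F) (a b : F) : Set F := {y | ∃ k ∈ (K : Set F), y = a * k + b}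

noncomputable def balancedIndicator {R : Type*} [Field R] (K : Subfield F) (a b : F) : F → R :=
  fun x => (line K a b).indicator 1 x - 1 / (Nat.card K : R)

lemma balancedIndicator_eq_sub {R : Type*} [Field R] (a b : F) :
    balancedIndicator K a b = (line K a b).indicator 1 - fun _ => 1 / (Nat.card K : R) := rfl

lemma mem_line_self (a b : F) : b ∈ line K a b := ⟨0, K.zero_mem, by ring⟩

lemma mul_add_mem_line_iff {a b k x : F} (hk : k ∈ K) :
    a * k + x ∈ line K a b ↔ x ∈ line K a b := by
  constructor
  · rintro ⟨k', hk', h⟩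
    exact ⟨k' - k, K.sub_mem hk' hk, by linear_combination h⟩
  · rintro ⟨k', hk', rfl⟩
    exact ⟨k + k', K.add_mem hk hk', by ring⟩

lemma line_mul_add (a b : F) {k : F} (hk : k ∈ K) : line K a (a * k + b) = line K a b := by
  ext y
  constructor
  · rintro ⟨k', hk', rfl⟩
    exact ⟨k' + k, K.add_mem hk' hk, by ring⟩
  · rintro ⟨k', hk', rfl⟩
    exact ⟨k' - k, K.sub_mem hk' hk, by ring⟩

lemma line_mul_left (a b : F) {k : F} (hk : k ∈ K) (hk0 : k ≠ 0) :
    line K (a * k) b = line K a b := by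
  ext y
  constructor
  · rintro ⟨k', hk', rfl⟩
    exact ⟨k * k', K.mul_mem hk hk', by ring⟩
  · rintro ⟨k', hk', rfl⟩
    exact ⟨k⁻¹ * k', K.mul_mem (K.inv_mem hk) hk', by field_simp⟩

lemma mem_line_comm {a b y : F} : y ∈ line K a b ↔ b ∈ line K a y := by
  constructor <;>
  · rintro ⟨k, hk, h⟩
    exact ⟨-k, K.neg_mem hk, by linear_combination -h⟩

lemma div_notMem_comm {a d : F} (had : a / d ∉ K) : d / a ∉ K :=
  fun h => had (by simpa using K.inv_mem h)

lemma injective_mul_add_mul {a d : F} (had : a / d ∉ K) :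
    Function.Injective (fun p : K × K => a * p.1 + d * p.2) := by
  have hd : d ≠ 0 := by rintro rfl; simp at had
  rintro ⟨s, t⟩ ⟨s', t'⟩ h
  simp only at h
  by_cases hs : (s : F) = s'
  · rw [hs, add_right_inj, mul_right_inj' hd] at h
    exact Prod.ext (Subtype.ext hs) (Subtype.ext h)
  · refine absurd ?_ had
    have : a / d = (t' - t) / (s - s') := by
      rw [div_eq_div_iff hd (sub_ne_zero.2 hs)]
      linear_combination h
    rw [this]
    exact K.div_mem (K.sub_mem t'.2 t.2) (K.sub_mem s.2 s'.2)

variable [Finite F]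

lemma bijective_mul_add_mul (hF : Nat.card F = Nat.card K ^ 2) {a d : F} (had : a / d ∉ K) :
    Function.Bijective (fun p : K × K => a * p.1 + d * p.2) :=
  (injective_mul_add_mul had).bijective_of_nat_card_le (by rw [hF, Nat.card_prod, sq])

lemma existsUnique_mem_line (hF : Nat.card F = Nat.card K ^ 2) {a d : F} (had : a / d ∉ K)
    (x b : F) : ∃! t : K, x ∈ line K a (d * t + b) := by
  have hbij := bijective_mul_add_mul hF had
  obtain ⟨⟨s, t⟩, hst⟩ := hbij.2 (x - b)
  dsimp only at hst
  refine ⟨t, ⟨s, s.2, by linear_combination -hst⟩, ?_⟩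
  rintro t' ⟨s', hs', h⟩
  have := @hbij.1 ⟨⟨s', hs'⟩, t'⟩ ⟨s, t⟩ (by simp only; linear_combination -hst - h)
  exact congrArg Prod.snd this

end Geometry

open scoped Classical

section LineSum

variable {F : Type*} [Field F] [Fintype F] {K : Subfield F} {R : Type*} [Field R]

noncomputable def lineSum (K : Subfield F) (a : F) : (F → R) →ₗ[R] F → R where
  toFun v x := ∑ k : K, v (a * k + x)
  map_add' v w := by ext x; simp [sum_add_distrib]
  map_smul' r v := by ext x; simp [mul_sum]

lemma lineSum_apply (a : F) (v : F → R) (x : F) :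
    lineSum K a v x = ∑ k : K, v (a * k + x) := rfl

lemma lineSum_const (a : F) (r : R) :
    lineSum K a (fun _ => r) = fun _ => (Nat.card K : R) * r := by
  ext x
  simp [lineSum_apply, Nat.card_eq_fintype_card]

lemma lineSum_apply_eq_add_sum_ne_zero (a : F) (v : F → R) (x : F) :
    lineSum K a v x = v x + ∑ k : {k : K // k ≠ 0}, v (x - a * k) := by
  rw [lineSum_apply, ← Fintype.sum_equiv (Equiv.neg K) (fun k : K => v (x - a * k)) _
    fun k => by simp [sub_eq_add_neg, add_comm], Fintype.sum_eq_add_sum_subtype_ne _ 0]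
  simp

lemma lineSum_indicator_line_self (a b : F) :
    lineSum K a ((line K a b).indicator (1 : F → R)) =
      (Nat.card K : R) • (line K a b).indicator 1 := by
  ext x
  simp [lineSum_apply, Set.indicator_apply, mul_add_mem_line_iff (Subtype.property _),
    Nat.card_eq_fintype_card]

lemma lineSum_indicator_line (hF : Nat.card F = Nat.card K ^ 2) {a d : F} (had : a / d ∉ K)
    (b : F) : lineSum K a ((line K d b).indicator (1 : F → R)) = 1 := by
  ext x
  simp only [lineSum_apply, Set.indicator_apply, Pi.one_apply, mem_line_comm (y := a * _ + x)]
  exact sum_ite_eq_one_of_existsUnique (existsUnique_mem_line hF (div_notMem_comm had) b x)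

lemma lineSum_mul_add (a : F) (v : F → R) {k : F} (hk : k ∈ K) (x : F) :
    lineSum K a v (a * k + x) = lineSum K a v x := by
  simp only [lineSum_apply]
  exact Fintype.sum_equiv (Equiv.addRight ⟨k, hk⟩) _ _ fun k' => by
    simp only [Equiv.coe_addRight, Subfield.coe_add]; ring_nf

lemma sum_lineSum (a : F) (v : F → R) :
    ∑ x, lineSum K a v x = Nat.card K * ∑ x, v x := by
  simp only [lineSum_apply]
  rw [sum_comm]
  simp [fun k : K => Fintype.sum_equiv (Equiv.addLeft (a * k)) (fun x => v (a * k + x)) v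
    fun _ => rfl, Nat.card_eq_fintype_card]

lemma sum_lineSum_mul (hF : Nat.card F = Nat.card K ^ 2) {a d : F} (had : a / d ∉ K)
    (v : F → R) : ∑ t : K, lineSum K a v (d * t) = ∑ x, v x := by
  simp only [lineSum_apply]
  rw [sum_comm, ← Fintype.sum_prod_type']
  exact Fintype.sum_bijective _ (bijective_mul_add_mul hF had) _ _ fun _ => rfl

lemma sum_indicator_line_mul (hF : Nat.card F = Nat.card K ^ 2) {a d : F} (had : a / d ∉ K)
    (x : F) : ∑ t : K, (line K a (d * t)).indicator (1 : F → R) x = 1 := by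
  simp only [Set.indicator_apply, Pi.one_apply]
  exact sum_ite_eq_one_of_existsUnique (by simpa using existsUnique_mem_line hF had x 0)

lemma eq_sum_smul_indicator_line (hF : Nat.card F = Nat.card K ^ 2) {a d : F}
    (had : a / d ∉ K) {w : F → R} (hw : ∀ k ∈ K, ∀ x, w (a * k + x) = w x) :
    w = ∑ t : K, w (d * t) • (line K a (d * t)).indicator 1 := by
  ext x
  obtain ⟨t, ⟨k, hk, rfl⟩, huniq⟩ := existsUnique_mem_line hF had x 0
  simp only [add_zero] at huniq ⊢
  rw [Finset.sum_apply, Fintype.sum_eq_single t, hw k hk]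
  · simp [(mul_add_mem_line_iff hk).2 (mem_line_self _ _)]
  · intro t' ht'
    have : a * k + d * t ∉ line K a (d * t') := fun h => ht' (huniq t' h)
    simp [this]

lemma lineSum_balancedIndicator_self (a b : F) :
    lineSum K a (balancedIndicator K a b : F → R) =
      (Nat.card K : R) • balancedIndicator K a b := by
  rw [balancedIndicator_eq_sub, map_sub, lineSum_indicator_line_self, lineSum_const, smul_sub]
  rfl

lemma lineSum_mem_span (hF : Nat.card F = Nat.card K ^ 2) {a d : F} (had : a / d ∉ K)
    {v : F → R} (hv : ∑ x, v x = 0) :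
    lineSum K a v ∈ Submodule.span R (Set.range fun t : K => balancedIndicator K a (d * t)) := by
  have hw : lineSum K a v = ∑ t : K, lineSum K a v (d * t) • balancedIndicator K a (d * t) := by
    have hconst : ∑ t : K, lineSum K a v (d * t) = 0 := (sum_lineSum_mul hF had v).trans hv
    simp only [balancedIndicator_eq_sub, smul_sub, sum_sub_distrib, ← sum_smul, hconst, zero_smul,
      sub_zero]
    exact eq_sum_smul_indicator_line hF had fun k hk x => lineSum_mul_add a v hk x
  rw [hw]
  exact Submodule.sum_mem _ fun t _ => Submodule.smul_mem _ _ (Submodule.subset_span ⟨t, rfl⟩)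

variable [CharZero R]

lemma cast_natCard_ne_zero : (Nat.card K : R) ≠ 0 := by
  simp [Nat.card_eq_fintype_card, Fintype.card_ne_zero]

lemma lineSum_balancedIndicator_of_div_notMem (hF : Nat.card F = Nat.card K ^ 2) {a d : F}
    (had : a / d ∉ K) (b : F) : lineSum K a (balancedIndicator K d b : F → R) = 0 := by
  rw [balancedIndicator_eq_sub, map_sub, lineSum_indicator_line hF had, lineSum_const]
  ext x
  simp

lemma sum_balancedIndicator_mul (hF : Nat.card F = Nat.card K ^ 2) {a d : F} (had : a / d ∉ K) :
    ∑ t : K, (balancedIndicator K a (d * t) : F → R) = 0 := by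
  ext x
  simp [Finset.sum_apply, balancedIndicator, sum_sub_distrib, sum_indicator_line_mul hF had x,
    ← Nat.card_eq_fintype_card]

lemma balancedIndicator_mem_span_ne_zero (hF : Nat.card F = Nat.card K ^ 2) {a d : F}
    (had : a / d ∉ K) (t : K) :
    (balancedIndicator K a (d * t) : F → R) ∈
      Submodule.span R (Set.range fun t : {t : K // t ≠ 0} => balancedIndicator K a (d * t)) := by
  by_cases ht : t = 0
  · have hsum := Fintype.sum_eq_add_sum_subtype_ne
      (fun t : K => (balancedIndicator K a (d * t) : F → R)) 0
    rw [sum_balancedIndicator_mul hF had, eq_comm, add_eq_zero_iff_eq_neg] at hsum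
    rw [ht, hsum]
    exact Submodule.neg_mem _ <|
      Submodule.sum_mem _ fun t _ => Submodule.subset_span ⟨t, rfl⟩
  · exact Submodule.subset_span ⟨⟨t, ht⟩, rfl⟩

lemma linearIndependent_balancedIndicator (hF : Nat.card F = Nat.card K ^ 2) {a d : F}
    (had : a / d ∉ K) :
    LinearIndependent R
      fun t : {t : K // t ≠ 0} => (balancedIndicator K a (d * t) : F → R) := by
  have hmem (s t : K) : d * s ∈ line K a (d * t) ↔ s = t := by
    obtain ⟨t₀, -, huniq⟩ := existsUnique_mem_line hF had (d * s) 0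
    simp only [add_zero] at huniq
    refine ⟨fun h => (huniq s (mem_line_self _ _)).trans (huniq t h).symm, ?_⟩
    rintro rfl
    exact mem_line_self _ _
  rw [Fintype.linearIndependent_iff]
  intro g hg
  have heval (x : F) : ∑ t, g t * (line K a (d * t)).indicator 1 x =
      (∑ t, g t) / Nat.card K := by
    have := congrFun hg x
    simp only [Finset.sum_apply, Pi.smul_apply, smul_eq_mul, balancedIndicator, mul_sub,
      sum_sub_distrib, Pi.zero_apply, sub_eq_zero] at this
    rw [this, ← sum_mul]
    ring
  -- `0 = d * 0` lies on none of the lines `a K + d t` with `t ≠ 0`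
  have hsum : ∑ t, g t = 0 := by
    have := heval (d * (0 : K))
    simp only [Set.indicator_apply, hmem, Pi.one_apply, mul_ite, mul_one, mul_zero] at this
    rw [Finset.sum_eq_zero fun t _ => if_neg t.2.symm, eq_comm, div_eq_zero_iff] at this
    exact this.resolve_right cast_natCard_ne_zero
  intro t
  have := heval (d * t)
  simpa [Set.indicator_apply, hmem, Subtype.coe_inj, hsum] using this

end LineSum

section ConnectionSet

variable {F : Type*} [Field F] {K : Subfield F} {R : Type*} [Field R]
  {m : ℕ} {c : Fin m → F} {S : Set F}

structure IsPeisertConnectionSet (K : Subfield F) (c : Fin m → F) (S : Set F) : Prop where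
  eq_iUnion : S = ⋃ i, {x | ∃ k ∈ (K : Set F), k ≠ 0 ∧ x = c i * k}
  ne_zero : ∀ i, c i ≠ 0
  div_notMem : ∀ i j, i ≠ j → c i / c j ∉ K

def balancedCliqueIndicators (K : Subfield F) (S : Set F) : Set (F → R) :=
  {v | ∃ a ∈ S, ∃ b, v = balancedIndicator K a b}

lemma balancedIndicator_mem_balancedCliqueIndicators
    (hS : S = ⋃ i, {x | ∃ k ∈ (K : Set F), k ≠ 0 ∧ x = c i * k}) (i : Fin m) (b : F) :
    (balancedIndicator K (c i) b : F → R) ∈ balancedCliqueIndicators K S :=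
  ⟨c i, hS ▸ Set.mem_iUnion.2 ⟨i, 1, K.one_mem, one_ne_zero, (mul_one _).symm⟩, b, rfl⟩

lemma exists_eq_balancedIndicator_of_mem_balancedCliqueIndicators
    (hS : S = ⋃ i, {x | ∃ k ∈ (K : Set F), k ≠ 0 ∧ x = c i * k}) {v : F → R}
    (hv : v ∈ balancedCliqueIndicators K S) : ∃ i b, v = balancedIndicator K (c i) b := by
  obtain ⟨a, ha, b, rfl⟩ := hv
  rw [hS] at ha
  obtain ⟨i, k, hk, hk0, rfl⟩ := Set.mem_iUnion.1 ha
  refine ⟨i, b, ?_⟩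
  rw [balancedIndicator_eq_sub, line_mul_left _ _ hk hk0, balancedIndicator_eq_sub]

namespace IsPeisertConnectionSet

lemma zero_notMem (hP : IsPeisertConnectionSet K c S) : (0 : F) ∉ S := by
  rw [hP.eq_iUnion, Set.mem_iUnion]
  rintro ⟨i, k, -, hk0, h⟩
  exact mul_ne_zero (hP.ne_zero i) hk0 h.symm

lemma exists_transversal (hP : IsPeisertConnectionSet K c S) (hm : 2 ≤ m) :
    ∃ d : Fin m → F, ∀ i, c i / d i ∉ K := by
  have : Nontrivial (Fin m) := Fin.nontrivial_iff_two_le.2 hm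
  choose j hj using fun i : Fin m => exists_ne i
  exact ⟨c ∘ j, fun i => hP.div_notMem i (j i) (hj i).symm⟩

variable [Fintype F]

lemma sum_indicator (hP : IsPeisertConnectionSet K c S) (g : F → R) :
    ∑ w, S.indicator g w = ∑ i, ∑ k : {k : K // k ≠ 0}, g (c i * k) := by
  let f : Fin m × {k : K // k ≠ 0} → F := fun p => c p.1 * p.2
  have hinj : Function.Injective f := by
    rintro ⟨i, k, hk⟩ ⟨j, k', hk'⟩ h
    simp only [f] at h
    obtain rfl : i = j := by
      by_contra hij
      refine hP.div_notMem i j hij ?_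
      rw [show c i / c j = k' / k by
        rw [div_eq_div_iff (hP.ne_zero j) (by simpa using hk)]; linear_combination h]
      exact K.div_mem k'.2 k.2
    simpa using mul_left_cancel₀ (hP.ne_zero i) h
  have hS : S = ↑(univ.image f) := by
    ext x
    simp only [hP.eq_iUnion, Set.mem_iUnion, Set.mem_ofPred_eq, coe_image, coe_univ,
      Set.image_univ, Set.mem_range, Prod.exists, Subtype.exists, f]
    constructor
    · rintro ⟨i, k, hk, hk0, rfl⟩
      exact ⟨i, k, hk, fun h => hk0 (congrArg Subtype.val h), rfl⟩
    · rintro ⟨i, k, hk, hk0, rfl⟩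
      exact ⟨i, k, hk, fun h => hk0 (Subtype.ext h), rfl⟩
  rw [← Fintype.sum_prod_type', hS, sum_indicator_subset _ (subset_univ _),
    sum_image hinj.injOn]

variable {M : Matrix F F R}

lemma mulVec_eq_sum_lineSum (hP : IsPeisertConnectionSet K c S)
    (hM : ∀ x y, M x y = if x - y ∈ S then 1 else 0) (v : F → R) :
    M *ᵥ v = ∑ i, lineSum K (c i) v - (m : R) • v := by
  ext x
  have hconv : (M *ᵥ v) x = ∑ w, S.indicator (fun w => v (x - w)) w :=
    Fintype.sum_equiv (Equiv.subLeft x) _ _ fun y => by simp [hM, Set.indicator_apply]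
  rw [hconv, hP.sum_indicator]
  simp [Finset.sum_apply, lineSum_apply_eq_add_sum_ne_zero, sum_add_distrib]

variable [CharZero R]

lemma mulVec_balancedIndicator (hF : Nat.card F = Nat.card K ^ 2)
    (hP : IsPeisertConnectionSet K c S)
    (hM : ∀ x y, M x y = if x - y ∈ S then 1 else 0) (i : Fin m) (b : F) :
    M *ᵥ balancedIndicator K (c i) b =
      ((Nat.card K : R) - m) • balancedIndicator K (c i) b := by
  rw [hP.mulVec_eq_sum_lineSum hM, Fintype.sum_eq_single i fun j hj =>
    lineSum_balancedIndicator_of_div_notMem hF (hP.div_notMem j i hj) b,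
    lineSum_balancedIndicator_self, sub_smul]

lemma mulVec_eq_of_mem_span (hF : Nat.card F = Nat.card K ^ 2)
    (hP : IsPeisertConnectionSet K c S) (hM : ∀ x y, M x y = if x - y ∈ S then 1 else 0)
    {v : F → R} (hv : v ∈ Submodule.span R (balancedCliqueIndicators K S)) :
    M *ᵥ v = ((Nat.card K : R) - m) • v := by
  induction hv using Submodule.span_induction with
  | mem w hw =>
    obtain ⟨i, b, rfl⟩ :=
      exists_eq_balancedIndicator_of_mem_balancedCliqueIndicators hP.eq_iUnion hw
    exact hP.mulVec_balancedIndicator hF hM i b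
  | zero => simp
  | add w w' _ _ hw hw' => rw [mulVec_add, hw, hw', smul_add]
  | smul r w _ hw => rw [mulVec_smul, hw, smul_comm]

lemma sum_eq_zero_of_mulVec_eq (hP : IsPeisertConnectionSet K c S)
    (hM : ∀ x y, M x y = if x - y ∈ S then 1 else 0) (hm : 2 ≤ m) {v : F → R}
    (hv : M *ᵥ v = ((Nat.card K : R) - m) • v) : ∑ x, v x = 0 := by
  have hsum := congrArg (fun w => ∑ x, w x) hv
  simp only [hP.mulVec_eq_sum_lineSum hM, Pi.sub_apply, Finset.sum_apply, Pi.smul_apply,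
    smul_eq_mul, sum_sub_distrib, ← mul_sum] at hsum
  rw [sum_comm] at hsum
  simp only [sum_lineSum, sum_const, card_univ, Fintype.card_fin, nsmul_eq_mul] at hsum
  have hm' : (m : R) - 1 ≠ 0 := by
    rw [sub_ne_zero]; exact_mod_cast (by omega : m ≠ 1)
  have : ((m : R) - 1) * Nat.card K * ∑ x, v x = 0 := by linear_combination hsum
  simpa [hm', cast_natCard_ne_zero] using this

lemma mem_span_of_mulVec_eq (hF : Nat.card F = Nat.card K ^ 2)
    (hP : IsPeisertConnectionSet K c S) (hM : ∀ x y, M x y = if x - y ∈ S then 1 else 0)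
    (hm : 2 ≤ m) {d : Fin m → F} (hd : ∀ i, c i / d i ∉ K) {v : F → R}
    (hv : M *ᵥ v = ((Nat.card K : R) - m) • v) :
    v ∈ Submodule.span R (balancedCliqueIndicators K S) := by
  have hsum := hP.sum_eq_zero_of_mulVec_eq hM hm hv
  have hv' : (Nat.card K : R) • v = ∑ i, lineSum K (c i) v := by
    rw [hP.mulVec_eq_sum_lineSum hM, sub_smul, sub_eq_iff_eq_add] at hv
    linear_combination (norm := module) -hv
  rw [← inv_smul_smul₀ (cast_natCard_ne_zero (K := K) (R := R)) v, hv']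
  refine Submodule.smul_mem _ _ (Submodule.sum_mem _ fun i _ => ?_)
  refine Submodule.span_mono ?_ (lineSum_mem_span hF (hd i) hsum)
  rintro _ ⟨t, rfl⟩
  exact balancedIndicator_mem_balancedCliqueIndicators hP.eq_iUnion i _

lemma span_range_balancedIndicator_eq (hF : Nat.card F = Nat.card K ^ 2)
    (hS : S = ⋃ i, {x | ∃ k ∈ (K : Set F), k ≠ 0 ∧ x = c i * k}) {d : Fin m → F}
    (hd : ∀ i, c i / d i ∉ K) :
    Submodule.span R (Set.range fun p : Fin m × {t : K // t ≠ 0} =>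
      (balancedIndicator K (c p.1) (d p.1 * p.2) : F → R)) =
      Submodule.span R (balancedCliqueIndicators K S) := by
  refine le_antisymm (Submodule.span_mono ?_) (Submodule.span_le.2 fun v hv => ?_)
  · rintro _ ⟨p, rfl⟩
    exact balancedIndicator_mem_balancedCliqueIndicators hS p.1 _
  obtain ⟨i, b, rfl⟩ := exists_eq_balancedIndicator_of_mem_balancedCliqueIndicators hS hv
  obtain ⟨t, ⟨k, hk, hb⟩, -⟩ := existsUnique_mem_line hF (hd i) b 0
  rw [add_zero] at hb
  have hline : balancedIndicator K (c i) b = (balancedIndicator K (c i) (d i * t) : F → R) := by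
    rw [balancedIndicator_eq_sub, hb, line_mul_add _ _ hk, balancedIndicator_eq_sub]
  rw [hline]
  refine Submodule.span_mono ?_ (balancedIndicator_mem_span_ne_zero hF (hd i) t)
  rintro _ ⟨t', rfl⟩
  exact ⟨(i, t'), rfl⟩

lemma linearIndependent_balancedIndicator_pair (hF : Nat.card F = Nat.card K ^ 2)
    (hP : IsPeisertConnectionSet K c S) {d : Fin m → F} (hd : ∀ i, c i / d i ∉ K) :
    LinearIndependent R fun p : Fin m × {t : K // t ≠ 0} =>
      (balancedIndicator K (c p.1) (d p.1 * p.2) : F → R) := by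
  rw [Fintype.linearIndependent_iff]
  rintro g hg ⟨j, t⟩
  have hblock : ∑ t, g (j, t) • (balancedIndicator K (c j) (d j * t) : F → R) = 0 := by
    have := congrArg (lineSum K (c j)) hg
    rw [map_sum, map_zero, Fintype.sum_prod_type, Fintype.sum_eq_single j] at this
    · simp only [map_smul, lineSum_balancedIndicator_self, smul_comm (g _), ← smul_sum] at this
      exact (smul_eq_zero.1 this).resolve_left cast_natCard_ne_zero
    · intro i hi
      refine sum_eq_zero fun t _ => ?_
      rw [map_smul, lineSum_balancedIndicator_of_div_notMem hF (hP.div_notMem j i hi.symm),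
        smul_zero]
  exact Fintype.linearIndependent_iff.1 (linearIndependent_balancedIndicator (R := R) hF (hd j))
    (fun t => g (j, t)) hblock t

lemma finrank_span_balancedCliqueIndicators (hF : Nat.card F = Nat.card K ^ 2)
    (hP : IsPeisertConnectionSet K c S) {d : Fin m → F} (hd : ∀ i, c i / d i ∉ K) :
    Module.finrank R (Submodule.span R (balancedCliqueIndicators K S : Set (F → R))) =
      m * (Nat.card K - 1) := by
  rw [← span_range_balancedIndicator_eq hF hP.eq_iUnion hd,
    finrank_span_eq_card (linearIndependent_balancedIndicator_pair hF hP hd)]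
  simp [Fintype.card_subtype_compl, Nat.card_eq_fintype_card]

end IsPeisertConnectionSet

end ConnectionSet

end PeisertType

open PeisertType in
theorem stmt_15_general
    (q m : ℕ) (hm2 : 2 ≤ m)
    (F : Type) [Field F] [Fintype F]
    (hF : Fintype.card F = q ^ 2)
    (K : Subfield F) (hK : Nat.card K = q)
    (c : Fin m → F) (hc : ∀ i, c i ≠ 0)
    (hdistinct : ∀ i j : Fin m, i ≠ j → c i / c j ∉ K)
    (S : Set F)
    (hS : S = ⋃ i : Fin m, {x : F | ∃ k ∈ (K : Set F), k ≠ 0 ∧ x = c i * k})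
    (X : SimpleGraph F) [DecidableRel X.Adj]
    (hX : ∀ x y : F, X.Adj x y ↔ x ≠ y ∧ x - y ∈ S)
    (M : Matrix F F ℚ)
    (hM : ∀ x y : F, M x y = if X.Adj x y then 1 else 0)
    (B : Set (F → ℚ))
    (hB : B = {v : F → ℚ | ∃ a ∈ S, ∃ b : F,
      v = fun x => Set.indicator {y : F | ∃ k ∈ (K : Set F), y = a * k + b}
            (fun _ => (1 : ℚ)) x - 1 / (q : ℚ)}) :
    (∀ v : F → ℚ, M.mulVec v = ((q : ℚ) - (m : ℚ)) • v ↔ v ∈ Submodule.span ℚ B) ∧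
    Module.finrank ℚ (Submodule.span ℚ B) = m * (q - 1) := by
  classical
  subst hK
  have hF' : Nat.card F = Nat.card K ^ 2 := by rwa [Nat.card_eq_fintype_card]
  have hP : IsPeisertConnectionSet K c S := ⟨hS, hc, hdistinct⟩
  have hM' (x y : F) : M x y = if x - y ∈ S then 1 else 0 := by
    refine (hM x y).trans (if_congr ((hX x y).trans ⟨And.right, fun h => ⟨?_, h⟩⟩) rfl rfl)
    rintro rfl
    exact hP.zero_notMem (by rwa [sub_self] at h)
  obtain ⟨d, hd⟩ := hP.exists_transversal hm2
  obtain rfl : B = balancedCliqueIndicators K S := hB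
  exact ⟨fun v => ⟨hP.mem_span_of_mulVec_eq hF' hM' hm2 hd, hP.mulVec_eq_of_mem_span hF' hM'⟩,
    hP.finrank_span_balancedCliqueIndicators hF' hd⟩

/-- For a Peisert-type graph of type (m,q) with m ≥ 2, the (q−m)-eigenspace of the
adjacency matrix equals the ℚ-span of the balanced characteristic vectors of the
canonical cliques, and it has dimension m(q−1). -/
theorem stmt_15
    (q m : ℕ) (hqodd : Odd q) (hqpp : IsPrimePow q) (hm : m ≤ q) (hm2 : 2 ≤ m)
    (F : Type) [Field F] [Fintype F] [DecidableEq F]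
    (hF : Fintype.card F = q ^ 2)
    (K : Subfield F) (hK : Nat.card K = q)
    (c : Fin m → F) (hc : ∀ i, c i ≠ 0)
    (hdistinct : ∀ i j : Fin m, i ≠ j → c i / c j ∉ K)
    (S : Set F)
    (hS : S = ⋃ i : Fin m, {x : F | ∃ k ∈ (K : Set F), k ≠ 0 ∧ x = c i * k})
    (hKS : ∀ k : F, k ∈ K → k ≠ 0 → k ∈ S)
    (X : SimpleGraph F) [DecidableRel X.Adj]
    (hX : ∀ x y : F, X.Adj x y ↔ x ≠ y ∧ x - y ∈ S)
    (M : Matrix F F ℚ)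
    (hM : ∀ x y : F, M x y = if X.Adj x y then 1 else 0)
    (B : Set (F → ℚ))
    (hB : B = {v : F → ℚ | ∃ a ∈ S, ∃ b : F,
      v = fun x => Set.indicator {y : F | ∃ k ∈ (K : Set F), y = a * k + b}
            (fun _ => (1 : ℚ)) x - 1 / (q : ℚ)}) :
    (∀ v : F → ℚ, M.mulVec v = ((q : ℚ) - (m : ℚ)) • v ↔ v ∈ Submodule.span ℚ B) ∧
    Module.finrank ℚ (Submodule.span ℚ B) = m * (q - 1) :=
  stmt_15_general q m hm2 F hF K hK c hc hdistinct S hS X hX M hM B hB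
end

section
/- Let q be an odd prime power and let X be a Peisert-type graph of type (m,q). Then the independence number of X equals q; moreover, every maximum independent set of X meets every maximum clique of X in exactly one vertex. -/
/-!
On `(F, +)` the graph is a Cayley graph, so for an independent set `I` and a clique `C` the
map `(x, c) ↦ x - c` is injective on `I × C`: if `x₁ - c₁ = x₂ - c₂` with `c₁ ≠ c₂`, then
`x₁ - x₂ = c₁ - c₂ ∈ S`. Hence `|I| |C| ≤ q²`, and when equality holds the map is onto, so
`0 = x - c` gives a common vertex. The subfield `K` is a clique of size `q`, and `d K` is an
independent set of size `q` for any `d ∉ S ∪ {0}`, which exists because `|S| ≤ m (q - 1) < q² - 1`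
and `S` is stable under `K*`. So cliques and independent sets have at most `q` vertices, and
maximum ones of each kind meet in exactly one vertex.
-/

open Finset

namespace SimpleGraph

theorem card_inter_le_one_of_isIndepSet_of_isClique {V : Type*} [DecidableEq V]
    {X : SimpleGraph V} {I C : Finset V} (hI : X.IsIndepSet I) (hC : X.IsClique C) :
    #(I ∩ C) ≤ 1 :=
  card_le_one.2 fun a ha b hb => by
    rw [mem_inter] at ha hb
    by_contra hab
    exact hI ha.1 hb.1 hab (hC ha.2 hb.2 hab)

section AddGroup

variable {G : Type*} [AddGroup G] {S : Set G} {X : SimpleGraph G}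

theorem injOn_neg_add_of_isIndepSet_of_isClique (hX : ∀ x y, X.Adj x y ↔ x ≠ y ∧ x - y ∈ S)
    {I C : Set G} (hI : X.IsIndepSet I) (hC : X.IsClique C) :
    Set.InjOn (fun p : G × G => -p.2 + p.1) (I ×ˢ C) := by
  rintro ⟨x₁, c₁⟩ ⟨hx₁, hc₁⟩ ⟨x₂, c₂⟩ ⟨hx₂, hc₂⟩ (h : -c₁ + x₁ = -c₂ + x₂)
  have hsub : x₁ - x₂ = c₁ - c₂ :=
    calc x₁ - x₂ = (c₁ + (-c₁ + x₁)) - (c₂ + (-c₂ + x₂)) := by simp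
      _ = c₁ - c₂ := by rw [h, add_sub_add_right_eq_sub]
  by_cases hc : c₁ = c₂
  · rw [hc, sub_self, sub_eq_zero] at hsub
    rw [hsub, hc]
  have hx : x₁ ≠ x₂ := fun hx => hc (by rwa [hx, sub_self, eq_comm, sub_eq_zero] at hsub)
  exact absurd ((hX x₁ x₂).2 ⟨hx, hsub ▸ ((hX c₁ c₂).1 (hC hc₁ hc₂ hc)).2⟩) (hI hx₁ hx₂ hx)

variable [Fintype G]

theorem card_mul_card_le_of_isIndepSet_of_isClique (hX : ∀ x y, X.Adj x y ↔ x ≠ y ∧ x - y ∈ S)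
    {I C : Finset G} (hI : X.IsIndepSet I) (hC : X.IsClique C) :
    #I * #C ≤ Fintype.card G := by
  rw [← card_product, ← card_univ]
  exact card_le_card_of_injOn _ (fun _ _ => mem_univ _)
    (by simpa using injOn_neg_add_of_isIndepSet_of_isClique hX hI hC)

theorem inter_nonempty_of_card_mul_card_eq [DecidableEq G]
    (hX : ∀ x y, X.Adj x y ↔ x ≠ y ∧ x - y ∈ S) {I C : Finset G} (hI : X.IsIndepSet I)
    (hC : X.IsClique C) (h : #I * #C = Fintype.card G) : (I ∩ C).Nonempty := by
  have himage : (I ×ˢ C).image (fun p : G × G => -p.2 + p.1) = univ := by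
    refine eq_univ_of_card _ ?_
    rw [card_image_of_injOn (by simpa using injOn_neg_add_of_isIndepSet_of_isClique hX hI hC),
      card_product, h]
  obtain ⟨⟨x, y⟩, hxy, h0⟩ := mem_image.1 (himage ▸ mem_univ (0 : G))
  obtain ⟨hx, hy⟩ := mem_product.1 hxy
  obtain rfl : x = y := (neg_add_eq_zero.1 h0).symm
  exact ⟨x, mem_inter.2 ⟨hx, hy⟩⟩

end AddGroup

end SimpleGraph

namespace Subfield

variable {F : Type*} [Field F] (K : Subfield F) {ι : Type*} (c : ι → F)

def cosetUnion : Set F :=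
  ⋃ i, {x : F | ∃ k ∈ (K : Set F), k ≠ 0 ∧ x = c i * k}

variable {K c}

theorem mul_mem_cosetUnion {x k : F} (hx : x ∈ K.cosetUnion c) (hk : k ∈ K)
    (hk0 : k ≠ 0) : x * k ∈ K.cosetUnion c := by
  obtain ⟨i, k', hk', hk'0, rfl⟩ := Set.mem_iUnion.1 hx
  exact Set.mem_iUnion.2 ⟨i, k' * k, K.mul_mem hk' hk, mul_ne_zero hk'0 hk0, mul_assoc _ _ _⟩

theorem cosetUnion_subset_range :
    K.cosetUnion c ⊆ Set.range (fun p : ι × Kˣ => c p.1 * (p.2 : K)) := by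
  rintro x hx
  obtain ⟨i, k, hk, hk0, rfl⟩ := Set.mem_iUnion.1 hx
  have hk0' : (⟨k, hk⟩ : K) ≠ 0 := fun h => hk0 (congrArg Subtype.val h)
  exact ⟨(i, Units.mk0 _ hk0'), rfl⟩

theorem ncard_cosetUnion_le [Finite ι] [Finite K] :
    (K.cosetUnion c).ncard ≤ Nat.card ι * (Nat.card K - 1) :=
  calc (K.cosetUnion c).ncard ≤ (Set.range (fun p : ι × Kˣ => c p.1 * (p.2 : K))).ncard :=
        Set.ncard_le_ncard cosetUnion_subset_range (Set.finite_range _)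
    _ ≤ Nat.card (ι × Kˣ) := by rw [← Nat.card_coe_set_eq]; exact Finite.card_range_le _
    _ = Nat.card ι * (Nat.card K - 1) := by rw [Nat.card_prod, Nat.card_units]

theorem exists_ne_zero_notMem_cosetUnion [Finite F] {q m : ℕ}
    (hF : Nat.card F = q ^ 2) (hK : Nat.card K = q) (c : Fin m → F) (hm : m ≤ q) :
    ∃ d, d ≠ 0 ∧ d ∉ K.cosetUnion c := by
  have hq : 1 < q := hK ▸ Finite.one_lt_card
  have hlt : (insert 0 (K.cosetUnion c)).ncard < Nat.card F :=
    calc (insert 0 (K.cosetUnion c)).ncard ≤ (K.cosetUnion c).ncard + 1 := Set.ncard_insert_le _ _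
      _ ≤ m * (q - 1) + 1 := by simpa [hK] using ncard_cosetUnion_le (K := K) (c := c)
      _ ≤ q * (q - 1) + 1 := by gcongr
      _ < Nat.card F := by
        rw [hF, sq]; nlinarith [Nat.sub_add_cancel hq.le]
  obtain ⟨d, hd⟩ := (Set.ne_univ_iff_exists_notMem (insert 0 (K.cosetUnion c))).1 fun h =>
    hlt.ne (by rw [h, Set.ncard_univ])
  exact ⟨d, fun h => hd (Or.inl h), fun h => hd (Or.inr h)⟩

end Subfield

namespace SimpleGraph

variable {F : Type*} [Field F] {K : Subfield F} {S : Set F} {X : SimpleGraph F}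

theorem isClique_subfield (hX : ∀ x y, X.Adj x y ↔ x ≠ y ∧ x - y ∈ S)
    (hKS : ∀ k ∈ K, k ≠ 0 → k ∈ S) : X.IsClique (K : Set F) := fun x hx y hy hxy =>
  (hX x y).2 ⟨hxy, hKS _ (K.sub_mem hx hy) (sub_ne_zero.2 hxy)⟩

/-- An edge `d k₁ d k₂` would put `d = (d k₁ - d k₂) (k₁ - k₂)⁻¹` in `S`. -/
theorem isIndepSet_image_mul_subfield {ι : Type*} {c : ι → F}
    (hX : ∀ x y, X.Adj x y ↔ x ≠ y ∧ x - y ∈ K.cosetUnion c) {d : F}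
    (hd : d ∉ K.cosetUnion c) : X.IsIndepSet ((d * ·) '' K) := by
  rintro _ ⟨k₁, hk₁, rfl⟩ _ ⟨k₂, hk₂, rfl⟩ hne hadj
  have hk : k₁ - k₂ ≠ 0 := sub_ne_zero.2 fun h => hne (h ▸ rfl)
  have := Subfield.mul_mem_cosetUnion ((hX _ _).1 hadj).2 (K.inv_mem (K.sub_mem hk₁ hk₂))
    (inv_ne_zero hk)
  rw [← mul_sub, mul_assoc, mul_inv_cancel₀ hk, mul_one] at this
  exact hd this

end SimpleGraph

theorem stmt_16_general
    (q m : ℕ) (hm : m ≤ q)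
    (F : Type) [Field F] [Fintype F] [DecidableEq F]
    (hF : Fintype.card F = q ^ 2)
    (K : Subfield F) (hK : Nat.card K = q)
    (c : Fin m → F)
    (S : Set F)
    (hS : S = ⋃ i : Fin m, {x : F | ∃ k ∈ (K : Set F), k ≠ 0 ∧ x = c i * k})
    (hKS : ∀ k : F, k ∈ K → k ≠ 0 → k ∈ S)
    (X : SimpleGraph F)
    (hX : ∀ x y : F, X.Adj x y ↔ x ≠ y ∧ x - y ∈ S) :
    (∃ I : Finset F, (∀ x ∈ I, ∀ y ∈ I, x ≠ y → ¬ X.Adj x y) ∧ I.card = q) ∧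
    (∀ I : Finset F, (∀ x ∈ I, ∀ y ∈ I, x ≠ y → ¬ X.Adj x y) → I.card ≤ q) ∧
    (∀ I C : Finset F,
      (∀ x ∈ I, ∀ y ∈ I, x ≠ y → ¬ X.Adj x y) →
      (∀ J : Finset F, (∀ x ∈ J, ∀ y ∈ J, x ≠ y → ¬ X.Adj x y) → J.card ≤ I.card) →
      X.IsClique (C : Set F) →
      (∀ D : Finset F, X.IsClique (D : Set F) → D.card ≤ C.card) →
      (I ∩ C).card = 1) := by
  classical
  change S = K.cosetUnion c at hS
  subst hS
  obtain ⟨d, hd0, hdS⟩ :=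
    K.exists_ne_zero_notMem_cosetUnion (Nat.card_eq_fintype_card.trans hF) hK c hm
  have hq : 0 < q := hK ▸ Nat.card_pos
  set K' : Finset F := (K : Set F).toFinset
  set dK := K'.image (d * ·)
  have hK'card : #K' = q := by
    rw [Set.toFinset_card, ← Nat.card_eq_fintype_card, SetLike.coe_sort_coe, hK]
  have hdKcard : #dK = q := by rw [card_image_of_injective _ (mul_right_injective₀ hd0), hK'card]
  have hK'clique : X.IsClique (K' : Set F) := by
    simpa [K'] using SimpleGraph.isClique_subfield hX hKS
  have hdKindep : X.IsIndepSet (dK : Set F) := by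
    simpa [dK, K'] using SimpleGraph.isIndepSet_image_mul_subfield hX hdS
  have hindep_le (I : Finset F) (hI : X.IsIndepSet (I : Set F)) : #I ≤ q := by
    have := SimpleGraph.card_mul_card_le_of_isIndepSet_of_isClique hX hI hK'clique
    rw [hK'card, hF, sq] at this
    exact Nat.le_of_mul_le_mul_right this hq
  have hclique_le (C : Finset F) (hC : X.IsClique (C : Set F)) : #C ≤ q := by
    have := SimpleGraph.card_mul_card_le_of_isIndepSet_of_isClique hX hdKindep hC
    rw [hdKcard, hF, sq] at this
    exact Nat.le_of_mul_le_mul_left this hq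
  refine ⟨⟨dK, hdKindep, hdKcard⟩, hindep_le, fun I C hI hImax hC hCmax => ?_⟩
  have hIcard : #I = q := (hindep_le I hI).antisymm (hdKcard ▸ hImax dK hdKindep)
  have hCcard : #C = q := (hclique_le C hC).antisymm (hK'card ▸ hCmax K' hK'clique)
  refine (SimpleGraph.card_inter_le_one_of_isIndepSet_of_isClique hI hC).antisymm ?_
  exact (SimpleGraph.inter_nonempty_of_card_mul_card_eq hX hI hC
    (by rw [hIcard, hCcard, hF, sq])).card_pos

/-- A Peisert-type graph of type (m,q) has independence number q, and every maximum
independent set meets every maximum clique in exactly one vertex. -/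
theorem stmt_16
    (q m : ℕ) (hqodd : Odd q) (hqpp : IsPrimePow q) (hm : m ≤ q)
    (F : Type) [Field F] [Fintype F] [DecidableEq F]
    (hF : Fintype.card F = q ^ 2)
    (K : Subfield F) (hK : Nat.card K = q)
    (c : Fin m → F) (hc : ∀ i, c i ≠ 0)
    (hdistinct : ∀ i j : Fin m, i ≠ j → c i / c j ∉ K)
    (S : Set F)
    (hS : S = ⋃ i : Fin m, {x : F | ∃ k ∈ (K : Set F), k ≠ 0 ∧ x = c i * k})
    (hKS : ∀ k : F, k ∈ K → k ≠ 0 → k ∈ S)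
    (X : SimpleGraph F)
    (hX : ∀ x y : F, X.Adj x y ↔ x ≠ y ∧ x - y ∈ S) :
    (∃ I : Finset F, (∀ x ∈ I, ∀ y ∈ I, x ≠ y → ¬ X.Adj x y) ∧ I.card = q) ∧
    (∀ I : Finset F, (∀ x ∈ I, ∀ y ∈ I, x ≠ y → ¬ X.Adj x y) → I.card ≤ q) ∧
    (∀ I C : Finset F,
      (∀ x ∈ I, ∀ y ∈ I, x ≠ y → ¬ X.Adj x y) →
      (∀ J : Finset F, (∀ x ∈ J, ∀ y ∈ J, x ≠ y → ¬ X.Adj x y) → J.card ≤ I.card) →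
      X.IsClique (C : Set F) →
      (∀ D : Finset F, X.IsClique (D : Set F) → D.card ≤ C.card) →
      (I ∩ C).card = 1) :=
  stmt_16_general q m hm F hF K hK c S hS hKS X hX
end
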